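/- Let $\bm{x}_n \in \mathcal{D}([0,\infty),\mathbb{R}^k)$ and $\bm{y} \in \mathcal{C}([0,\infty),\mathbb{R}^k)$ with $y_j(0) < B_j$ and $T_{B_j}(y_j) = \widetilde{T}_{B_j}(y_j) < \infty$ for all $1 \le j \le k$, and suppose the minimum $\tau_1 = \min_j T_{B_j}(y_j)$ is attained by a unique index $\eta_1 = j^*$. If each component $x_{j;n} \to y_j$ in $\mathcal{D}([0,\infty),\mathbb{R})$, then $\tau_{1;n} := \min_j T_{B_j}(x_{j;n}) \to \tau_1$, $\bm{x}_n(\tau_{1;n}) \to \bm{y}(\tau_1)$, and for $n$ sufficiently large the set of components of $\bm{x}_n$ attaining their boundary at $\tau_{1;n}$ equals $\{j^*\}$. -/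

import Mathlib

/-!
Each component passage time depends continuously on the path at `y`: uniform convergence on
`[0, s]` past a time where `y > B` pushes `FPT (x n) B` down, while on `[0, c]` with
`c < FPT y B` the continuous `y` stays below `B` by a positive margin (this is where
`FPT = HT` enters), which keeps `FPT (x n) B ≥ c`. Since the minimum over the components is
strict, it is eventually attained only by `j*`, and the values `x n j (τ₁ₙ)` converge because
uniform convergence commutes with evaluation along converging times.
-/

open Filter MeasureTheory Set

/-- First passage time of `f` above level `B`. -/
noncomputable def FPT (f : ℝ → ℝ) (B : ℝ) : ℝ := sInf {t : ℝ | 0 < t ∧ B < f t}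

/-- Hitting time of `f` at the level `B`. -/
noncomputable def HT (f : ℝ → ℝ) (B : ℝ) : ℝ := sInf {t : ℝ | 0 < t ∧ f t = B}

/-- A real function is càdlàg on `[0,∞)`. -/
def Cadlag (f : ℝ → ℝ) : Prop :=
  (∀ t : ℝ, 0 ≤ t → ContinuousWithinAt f (Set.Ici t) t) ∧
  (∀ t : ℝ, 0 < t → ∃ L : ℝ, Filter.Tendsto f (nhdsWithin t (Set.Iio t)) (nhds L))

open Topology

section PassageTime

variable {f : ℝ → ℝ} {B t : ℝ}

lemma FPT_nonneg (f : ℝ → ℝ) (B : ℝ) : 0 ≤ FPT f B :=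
  Real.sInf_nonneg fun _ ht => ht.1.le

lemma FPT_le (ht : 0 < t) (hB : B < f t) : FPT f B ≤ t :=
  csInf_le ⟨0, fun _ hs => hs.1.le⟩ ⟨ht, hB⟩

lemma HT_le (ht : 0 < t) (hB : f t = B) : HT f B ≤ t :=
  csInf_le ⟨0, fun _ hs => hs.1.le⟩ ⟨ht, hB⟩

lemma le_FPT {c : ℝ} (hne : {t | 0 < t ∧ B < f t}.Nonempty) (h : ∀ t ∈ Ioc 0 c, f t < B) :
    c ≤ FPT f B := by
  refine le_csInf hne fun t ⟨ht, hB⟩ => ?_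
  by_contra! htc
  exact (h t ⟨ht, htc.le⟩).not_gt hB

lemma lt_of_lt_FPT (h0 : f 0 < B) (hH : FPT f B = HT f B) (ht0 : 0 ≤ t) (ht : t < FPT f B) :
    f t < B := by
  rcases ht0.eq_or_lt with rfl | ht0
  · exact h0
  by_contra! hB
  rcases hB.eq_or_lt with hB | hB
  · exact (HT_le ht0 hB.symm).not_gt (hH ▸ ht)
  · exact (FPT_le ht0 hB).not_gt ht

end PassageTime

lemma TendstoUniformlyOn.eventually_forall_lt_of_isCompact {ι α : Type*} [TopologicalSpace α]
    {l : Filter ι} {F : ι → α → ℝ} {f : α → ℝ} {K : Set α} {B : ℝ}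
    (hF : TendstoUniformlyOn F f l K) (hK : IsCompact K) (hf : ContinuousOn f K)
    (hB : ∀ t ∈ K, f t < B) : ∀ᶠ n in l, ∀ t ∈ K, F n t < B := by
  rcases K.eq_empty_or_nonempty with rfl | hne
  · exact Eventually.of_forall fun _ t ht => ht.elim
  obtain ⟨t₀, ht₀, hmax⟩ := hK.exists_isMaxOn hne hf
  filter_upwards [Metric.tendstoUniformlyOn_iff.1 hF _ (sub_pos.2 (hB t₀ ht₀))] with n hn t ht
  have hclose := (abs_lt.1 ((Real.dist_eq _ _).symm ▸ hn t ht)).1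
  have hle : f t ≤ f t₀ := hmax ht
  linarith

section Convergence

variable {ι : Type*} {l : Filter ι} {x : ι → ℝ → ℝ} {y : ℝ → ℝ} {B : ℝ}

lemma eventually_FPT_lt (hconv : ∀ t, 0 < t → Tendsto (fun n => x n t) l (𝓝 (y t)))
    (hfin : {t | 0 < t ∧ B < y t}.Nonempty) {a : ℝ} (ha : FPT y B < a) :
    ∀ᶠ n in l, FPT (x n) B < a := by
  obtain ⟨s, ⟨hs, hsB⟩, hsa⟩ := (csInf_lt_iff ⟨0, fun _ ht => ht.1.le⟩ hfin).1 ha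
  filter_upwards [(hconv s hs).eventually (lt_mem_nhds hsB)] with n hn
  exact (FPT_le hs hn).trans_lt hsa

lemma eventually_lt_FPT (hy : ContinuousOn y (Ici 0)) (hy0 : y 0 < B) (hH : FPT y B = HT y B)
    (hfin : {t | 0 < t ∧ B < y t}.Nonempty)
    (hconv : ∀ s, 0 ≤ s → TendstoUniformlyOn x y l (Icc 0 s)) {a : ℝ} (ha : a < FPT y B) :
    ∀ᶠ n in l, a < FPT (x n) B := by
  rcases lt_or_ge a 0 with ha0 | ha0
  · exact Eventually.of_forall fun n => ha0.trans_le (FPT_nonneg _ _)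
  set c := (a + FPT y B) / 2 with hc
  have hc0 : 0 ≤ c := by linarith [hc]
  have hbelow : ∀ᶠ n in l, ∀ t ∈ Icc 0 c, x n t < B :=
    (hconv c hc0).eventually_forall_lt_of_isCompact isCompact_Icc (hy.mono Icc_subset_Ici_self)
      fun t ht => lt_of_lt_FPT hy0 hH ht.1 (by linarith [ht.2, hc])
  obtain ⟨s, hs, hsB⟩ := hfin
  have hcross : ∀ᶠ n in l, B < x n s :=
    ((hconv s hs.le).tendsto_at ⟨hs.le, le_rfl⟩).eventually (lt_mem_nhds hsB)
  filter_upwards [hbelow, hcross] with n hn hns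
  calc a < c := by linarith [hc]
    _ ≤ FPT (x n) B := le_FPT ⟨s, hs, hns⟩ fun t ht => hn t (Ioc_subset_Icc_self ht)

lemma tendsto_FPT (hy : ContinuousOn y (Ici 0)) (hy0 : y 0 < B) (hH : FPT y B = HT y B)
    (hfin : {t | 0 < t ∧ B < y t}.Nonempty)
    (hconv : ∀ s, 0 ≤ s → TendstoUniformlyOn x y l (Icc 0 s)) :
    Tendsto (fun n => FPT (x n) B) l (𝓝 (FPT y B)) :=
  tendsto_order.2
    ⟨fun _ ha => eventually_lt_FPT hy hy0 hH hfin hconv ha,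
     fun _ ha => eventually_FPT_lt
       (fun t ht => (hconv t ht.le).tendsto_at ⟨ht.le, le_rfl⟩) hfin ha⟩

lemma tendsto_apply_of_tendsto_time [l.NeBot] (hy : ContinuousOn y (Ici 0))
    (hconv : ∀ s, 0 ≤ s → TendstoUniformlyOn x y l (Icc 0 s)) {τ : ι → ℝ} {τ₀ : ℝ}
    (hτ0 : ∀ n, 0 ≤ τ n) (hτ : Tendsto τ l (𝓝 τ₀)) :
    Tendsto (fun n => x n (τ n)) l (𝓝 (y τ₀)) := by
  have hτ₀ : 0 ≤ τ₀ := ge_of_tendsto' hτ hτ0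
  have hwindow : ∀ᶠ n in l, τ n ∈ Icc 0 (τ₀ + 1) :=
    (hτ.eventually (gt_mem_nhds (lt_add_one τ₀))).mono fun n hn => ⟨hτ0 n, hn.le⟩
  exact (hconv _ (by linarith)).tendsto_comp
    ((hy τ₀ hτ₀).mono Icc_subset_Ici_self) (tendsto_nhdsWithin_iff.2 ⟨hτ, hwindow⟩)

end Convergence

section StrictMinimum

variable {κ α : Type*} [ConditionallyCompleteLinearOrder α] {f : κ → α} {j₀ : κ}

lemma iInf_eq_of_forall_lt (h : ∀ j ≠ j₀, f j₀ < f j) : ⨅ j, f j = f j₀ :=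
  IsLeast.csInf_eq ⟨mem_range_self j₀, by
    rintro _ ⟨j, rfl⟩
    rcases eq_or_ne j j₀ with rfl | hj
    exacts [le_rfl, (h j hj).le]⟩

lemma setOf_eq_iInf_eq_singleton (h : ∀ j ≠ j₀, f j₀ < f j) : {j | f j = ⨅ i, f i} = {j₀} := by
  ext j
  change f j = ⨅ i, f i ↔ j = j₀
  rw [iInf_eq_of_forall_lt h]
  refine ⟨fun hj => ?_, fun hj => hj ▸ rfl⟩
  by_contra hne
  exact (h j hne).ne' hj

lemma eventually_forall_lt_of_tendsto [Finite κ] {ι : Type*} {l : Filter ι} {F : ι → κ → ℝ}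
    {f : κ → ℝ} (hF : ∀ j, Tendsto (fun n => F n j) l (𝓝 (f j))) (h : ∀ j ≠ j₀, f j₀ < f j) :
    ∀ᶠ n in l, ∀ j ≠ j₀, F n j₀ < F n j := by
  refine eventually_all.2 fun j => ?_
  rcases eq_or_ne j j₀ with rfl | hj
  · exact Eventually.of_forall fun _ hj => absurd rfl hj
  obtain ⟨m, hm₀, hm⟩ := exists_between (h j hj)
  filter_upwards [(hF j₀).eventually (gt_mem_nhds hm₀), (hF j).eventually (lt_mem_nhds hm)]
    with n hn₀ hn _
  exact hn₀.trans hn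

end StrictMinimum

theorem first_window_triplet_convergence_general
    (k : ℕ) (x : ℕ → Fin k → ℝ → ℝ) (y : Fin k → ℝ → ℝ) (B : Fin k → ℝ)
    (hy : ∀ j, ContinuousOn (y j) (Set.Ici 0))
    (hy0 : ∀ j, y j 0 < B j)
    (hfin : ∀ j, {t : ℝ | 0 < t ∧ B j < y j t}.Nonempty)
    (hH : ∀ j, FPT (y j) (B j) = HT (y j) (B j))
    (jstar : Fin k)
    (hmin : ∀ j, j ≠ jstar → FPT (y jstar) (B jstar) < FPT (y j) (B j))
    (hconv : ∀ j, ∀ s : ℝ, 0 ≤ s →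
      TendstoUniformlyOn (fun n => x n j) (y j) atTop (Set.Icc 0 s)) :
    Tendsto (fun n => ⨅ j, FPT (x n j) (B j)) atTop (nhds (⨅ j, FPT (y j) (B j))) ∧
    (∀ j, Tendsto (fun n => x n j (⨅ i, FPT (x n i) (B i))) atTop
      (nhds (y j (⨅ i, FPT (y i) (B i))))) ∧
    (∀ᶠ n in atTop,
      {j : Fin k | FPT (x n j) (B j) = ⨅ i, FPT (x n i) (B i)} = {jstar}) := by
  have hcomp : ∀ j, Tendsto (fun n => FPT (x n j) (B j)) atTop (𝓝 (FPT (y j) (B j))) :=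
    fun j => tendsto_FPT (hy j) (hy0 j) (hH j) (hfin j) (hconv j)
  have hsep := eventually_forall_lt_of_tendsto hcomp hmin
  have hτ : Tendsto (fun n => ⨅ j, FPT (x n j) (B j)) atTop (𝓝 (⨅ j, FPT (y j) (B j))) := by
    rw [iInf_eq_of_forall_lt hmin]
    exact (hcomp jstar).congr' (hsep.mono fun n hn => (iInf_eq_of_forall_lt hn).symm)
  refine ⟨hτ, fun j => ?_, hsep.mono fun n hn => setOf_eq_iInf_eq_singleton hn⟩
  exact tendsto_apply_of_tendsto_time (hy j) (hconv j)
    (fun n => Real.iInf_nonneg fun i => FPT_nonneg _ _) hτ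

/-- Lemma 3 of the paper: componentwise Skorohod convergence
(equivalently locally uniform convergence, `y` being continuous) of the
multivariate paths implies convergence of the triplet
`(τ₁ₙ, xₙ(τ₁ₙ), η₁ₙ) → (τ₁, y(τ₁), η₁)`, where `τ₁` is the minimum of the
component passage times, attained by the unique component `j*`. -/
theorem first_window_triplet_convergence
    (k : ℕ) (x : ℕ → Fin k → ℝ → ℝ) (y : Fin k → ℝ → ℝ) (B : Fin k → ℝ)
    (hx : ∀ n j, Cadlag (x n j))
    (hy : ∀ j, ContinuousOn (y j) (Set.Ici 0))
    (hy0 : ∀ j, y j 0 < B j)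
    (hfin : ∀ j, {t : ℝ | 0 < t ∧ B j < y j t}.Nonempty)
    (hH : ∀ j, FPT (y j) (B j) = HT (y j) (B j))
    (jstar : Fin k)
    (hmin : ∀ j, j ≠ jstar → FPT (y jstar) (B jstar) < FPT (y j) (B j))
    (hconv : ∀ j, ∀ s : ℝ, 0 ≤ s →
      TendstoUniformlyOn (fun n => x n j) (y j) atTop (Set.Icc 0 s)) :
    Tendsto (fun n => ⨅ j, FPT (x n j) (B j)) atTop (nhds (⨅ j, FPT (y j) (B j))) ∧
    (∀ j, Tendsto (fun n => x n j (⨅ i, FPT (x n i) (B i))) atTop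
      (nhds (y j (⨅ i, FPT (y i) (B i))))) ∧
    (∀ᶠ n in atTop,
      {j : Fin k | FPT (x n j) (B j) = ⨅ i, FPT (x n i) (B i)} = {jstar}) :=
  first_window_triplet_convergence_general k x y B hy hy0 hfin hH jstar hmin hconv
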